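/- Let θ₀ ∈ (0, π/4) be the infimum of angles θ such that the cone ∂N_θ = {x : x₃² = |x|²·sin²θ} is disjoint from the catenoid Cat = {x : cosh²(x₃) = x₁² + x₂²}. Then ∂N_{θ₀} ∩ Cat is the union of exactly two circles, one in the upper half-space {x₃ > 0} and one in the lower half-space {x₃ < 0}, which are reflections of each other through the plane {x₃ = 0}. -/

import Mathlib

open Real Set

abbrev R3 := EuclideanSpace ℝ (Fin 3)

/-- The standard vertical catenoid centered at the origin. -/
def Cat : Set R3 := {x | Real.cosh (x 2) ^ 2 = x 0 ^ 2 + x 1 ^ 2}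

/-- The double cone `∂N_θ` of angle `θ` about the horizontal plane through the origin. -/
def coneBdry (θ : ℝ) : Set R3 := {x | (x 2) ^ 2 = ‖x‖ ^ 2 * Real.sin θ ^ 2}

/-- The critical angle: the infimum of angles `θ ∈ (0, π/2)` for which the cone
`∂N_θ` is disjoint from the catenoid. -/
noncomputable def θ₀ : ℝ := sInf {θ | θ ∈ Ioo 0 (π / 2) ∧ coneBdry θ ∩ Cat = ∅}

/- ### Auxiliary lemmas -/

lemma exists_t0 : ∃ t : ℝ, 0 < t ∧ Real.cosh t = t * Real.sinh t := by
  set g : ℝ → ℝ := fun t => t * Real.sinh t - Real.cosh t with hg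
  have hc : ContinuousOn g (Icc 0 2) :=
    ((continuous_id.mul Real.continuous_sinh).sub Real.continuous_cosh).continuousOn
  have h0 : g 0 = -1 := by simp [hg]
  have h2 : 0 < g 2 := by
    have he : (3:ℝ) ≤ Real.exp 2 := by have := Real.add_one_le_exp 2; linarith
    have hp : (0:ℝ) < Real.exp 2 := Real.exp_pos 2
    have hinv : Real.exp (-2) ≤ 1/3 := by
      rw [Real.exp_neg]
      rw [inv_le_comm₀ (by positivity) (by norm_num)]
      linarith
    have hinvpos : (0:ℝ) < Real.exp (-2) := Real.exp_pos _
    simp only [hg, Real.sinh_eq, Real.cosh_eq]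
    nlinarith
  have hsub : (0:ℝ) ∈ Icc (g 0) (g 2) := by constructor <;> linarith
  obtain ⟨t, ht, hgt⟩ := intermediate_value_Icc (by norm_num : (0:ℝ) ≤ 2) hc hsub
  refine ⟨t, ?_, by simp [hg, sub_eq_zero] at hgt; linarith⟩
  rcases eq_or_lt_of_le ht.1 with h | h
  · exfalso; rw [← h] at hgt; rw [h0] at hgt; norm_num at hgt
  · exact h

lemma phi_pos {t₀ t : ℝ} (h0 : 0 < t₀) (he : Real.cosh t₀ = t₀ * Real.sinh t₀)
    (ht : 0 < t) (hne : t ≠ t₀) : t * Real.cosh t₀ < t₀ * Real.cosh t := by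
  set φ : ℝ → ℝ := fun s => t₀ * Real.cosh s - s * Real.cosh t₀ with hφ
  have hd : ∀ s, HasDerivAt φ (t₀ * Real.sinh s - Real.cosh t₀) s := fun s => by
    have h1 := (Real.hasDerivAt_cosh s).const_mul t₀
    have h2 := (hasDerivAt_id s).mul_const (Real.cosh t₀)
    have h3 := h1.sub h2
    rw [one_mul] at h3
    exact h3
  have hcont : Continuous φ :=
    (continuous_const.mul Real.continuous_cosh).sub (continuous_id.mul continuous_const)
  have hφ0 : φ t₀ = 0 := by simp [hφ]
  have key : 0 < φ t := by
    rcases lt_or_gt_of_ne hne with h | h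
    · have hanti : StrictAntiOn φ (Icc 0 t₀) := by
        apply strictAntiOn_of_deriv_neg (convex_Icc 0 t₀) hcont.continuousOn
        intro s hs
        rw [interior_Icc] at hs
        rw [(hd s).deriv, he]
        have : Real.sinh s < Real.sinh t₀ := Real.sinh_lt_sinh.mpr hs.2
        nlinarith
      have := hanti ⟨ht.le, h.le⟩ ⟨h0.le, le_refl _⟩ h
      linarith [hφ0 ▸ this]
    · have hmono : StrictMonoOn φ (Ici t₀) := by
        apply strictMonoOn_of_deriv_pos (convex_Ici t₀) hcont.continuousOn
        intro s hs
        rw [interior_Ici] at hs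
        rw [(hd s).deriv, he]
        have : Real.sinh t₀ < Real.sinh s := Real.sinh_lt_sinh.mpr hs
        nlinarith
      have := hmono (self_mem_Ici) (le_of_lt h) h
      linarith [hφ0 ▸ this]
  simp only [hφ] at key
  linarith

lemma sq_cosh_lt {t₀ t : ℝ} (h0 : 0 < t₀) (he : Real.cosh t₀ = t₀ * Real.sinh t₀)
    (hne1 : t ≠ t₀) (hne2 : t ≠ -t₀) :
    t ^ 2 * Real.cosh t₀ ^ 2 < t₀ ^ 2 * Real.cosh t ^ 2 := by
  rcases eq_or_ne t 0 with rfl | ht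
  · have h := mul_pos (pow_pos h0 2) (pow_pos (Real.cosh_pos (0:ℝ)) 2)
    nlinarith
  · have habs : 0 < |t| := abs_pos.mpr ht
    have hne : |t| ≠ t₀ := by
      rcases abs_cases t with ⟨h, _⟩ | ⟨h, _⟩
      · rw [h]; exact hne1
      · rw [h]; intro hc; exact hne2 (by linarith)
    have h1 := phi_pos h0 he habs hne
    rw [Real.cosh_abs] at h1
    have h2 : (0:ℝ) ≤ |t| * Real.cosh t₀ := by positivity
    have h3 := mul_self_lt_mul_self h2 h1
    nlinarith [sq_abs t]

lemma sq_cosh_le {t₀ : ℝ} (h0 : 0 < t₀) (he : Real.cosh t₀ = t₀ * Real.sinh t₀) (t : ℝ) :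
    t ^ 2 * Real.cosh t₀ ^ 2 ≤ t₀ ^ 2 * Real.cosh t ^ 2 := by
  rcases eq_or_ne t t₀ with rfl | h1
  · exact le_refl _
  · rcases eq_or_ne t (-t₀) with rfl | h2
    · rw [Real.cosh_neg, neg_pow]
      ring_nf
      exact le_refl _
    · exact (sq_cosh_lt h0 he h1 h2).le

lemma norm_sq_R3 (x : R3) : ‖x‖ ^ 2 = x 0 ^ 2 + x 1 ^ 2 + x 2 ^ 2 := by
  rw [EuclideanSpace.norm_eq, Real.sq_sqrt (by positivity)]
  simp [Fin.sum_univ_three, Real.norm_eq_abs, sq_abs]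

/-- Membership characterization of the intersection. -/
lemma mem_inter_iff' (θ : ℝ) (x : R3) :
    x ∈ coneBdry θ ∩ Cat ↔
      (x 2) ^ 2 = (Real.cosh (x 2) ^ 2 + (x 2) ^ 2) * Real.sin θ ^ 2 ∧
      Real.cosh (x 2) ^ 2 = x 0 ^ 2 + x 1 ^ 2 := by
  simp only [mem_inter_iff, coneBdry, Cat, mem_setOf_eq, norm_sq_R3]
  constructor
  · rintro ⟨h1, h2⟩
    refine ⟨?_, h2⟩
    rw [h2]
    exact h1
  · rintro ⟨h1, h2⟩
    refine ⟨?_, h2⟩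
    rw [h2] at h1
    exact h1

lemma empty_iff {t₀ : ℝ} (h0 : 0 < t₀) (he : Real.cosh t₀ = t₀ * Real.sinh t₀)
    {θ : ℝ} (hθ : θ ∈ Ioo 0 (π/2)) :
    coneBdry θ ∩ Cat = ∅ ↔
      t₀ ^ 2 < (t₀ ^ 2 + Real.cosh t₀ ^ 2) * Real.sin θ ^ 2 := by
  constructor
  · -- contrapositive: if ≤ then nonempty
    intro hempty
    by_contra hle
    push_neg at hle
    set s2 := Real.sin θ ^ 2 with hs2
    have hspos : 0 < s2 := by
      have := Real.sin_pos_of_pos_of_lt_pi hθ.1 (by linarith [Real.pi_pos, hθ.2])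
      positivity
    set F : ℝ → ℝ := fun t => t ^ 2 - (Real.cosh t ^ 2 + t ^ 2) * s2 with hF
    have hc : ContinuousOn F (Icc 0 t₀) := by
      apply Continuous.continuousOn
      continuity
    have hF0 : F 0 < 0 := by simp [hF]; nlinarith [Real.cosh_pos (0:ℝ)]
    have hFt0 : 0 ≤ F t₀ := by simp [hF]; nlinarith
    have hsub : (0:ℝ) ∈ Icc (F 0) (F t₀) := ⟨hF0.le, hFt0⟩
    obtain ⟨t, ht, hFt⟩ := intermediate_value_Icc h0.le hc hsub
    have hteq : t ^ 2 = (Real.cosh t ^ 2 + t ^ 2) * s2 := by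
      simp only [hF] at hFt; linarith
    set x : R3 := (WithLp.equiv 2 (Fin 3 → ℝ)).symm ![Real.cosh t, 0, t] with hx
    have hx0 : x 0 = Real.cosh t := rfl
    have hx1 : x 1 = 0 := rfl
    have hx2 : x 2 = t := rfl
    have : x ∈ coneBdry θ ∩ Cat := by
      rw [mem_inter_iff', hx0, hx1, hx2]
      constructor
      · exact hteq
      · ring
    rw [hempty] at this
    exact this
  · intro hlt
    ext x
    simp only [mem_empty_iff_false, iff_false]
    intro hx
    rw [mem_inter_iff'] at hx
    obtain ⟨h1, _⟩ := hx
    set t := x 2 with htdef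
    have hle := sq_cosh_le h0 he t
    have hpos : 0 < t ^ 2 + Real.cosh t ^ 2 := by positivity
    -- t² = (t²+cosh²t)·s², and t²·(t₀²+c²) ≤ t₀²·(t²+cosh²t)
    -- so (t²+cosh²t)·s²·(t₀²+c²) ≤ t₀²·(t²+cosh²t); divide
    nlinarith [sq_nonneg (Real.sin θ), hlt, h1, hle]

lemma sin_theta0 {t₀ : ℝ} (h0 : 0 < t₀) (he : Real.cosh t₀ = t₀ * Real.sinh t₀) :
    Real.sin θ₀ ^ 2 * (t₀ ^ 2 + Real.cosh t₀ ^ 2) = t₀ ^ 2 := by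
  set c := Real.cosh t₀ with hc
  have hcpos : 0 < c := Real.cosh_pos t₀
  set m : ℝ := t₀ ^ 2 / (t₀ ^ 2 + c ^ 2) with hm
  have hden : 0 < t₀ ^ 2 + c ^ 2 := by positivity
  have hm0 : 0 < m := by positivity
  have hm1 : m < 1 := by
    rw [hm, div_lt_one hden]; nlinarith
  set a : ℝ := Real.arcsin (Real.sqrt m) with ha
  have hsm0 : 0 < Real.sqrt m := Real.sqrt_pos.mpr hm0
  have hsm1 : Real.sqrt m < 1 := by
    rw [show (1:ℝ) = Real.sqrt 1 by simp]
    exact Real.sqrt_lt_sqrt hm0.le hm1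
  have ha0 : 0 < a := Real.arcsin_pos.mpr hsm0
  have haπ : a < π / 2 := Real.arcsin_lt_pi_div_two.mpr hsm1
  have hsina : Real.sin a = Real.sqrt m := Real.sin_arcsin (by linarith) hsm1.le
  have hsina2 : Real.sin a ^ 2 = m := by
    rw [hsina, Real.sq_sqrt hm0.le]
  -- identity: m * (t₀²+c²) = t₀²
  have hmid : m * (t₀ ^ 2 + c ^ 2) = t₀ ^ 2 := by
    rw [hm]; field_simp
  -- the set in the definition of θ₀ equals Ioo a (π/2)
  have hset : {θ | θ ∈ Ioo 0 (π / 2) ∧ coneBdry θ ∩ Cat = ∅} = Ioo a (π/2) := by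
    ext θ
    simp only [mem_setOf_eq, mem_Ioo]
    constructor
    · rintro ⟨⟨hθ0, hθπ⟩, hemp⟩
      rw [empty_iff h0 he ⟨hθ0, hθπ⟩] at hemp
      refine ⟨?_, hθπ⟩
      -- sin²θ > m, so sinθ > sin a, so θ > a
      have hsθ : 0 < Real.sin θ :=
        Real.sin_pos_of_pos_of_lt_pi hθ0 (by linarith [Real.pi_pos])
      have hst2 : Real.sin a ^ 2 < Real.sin θ ^ 2 := by
        rw [hsina2, hm]
        rw [div_lt_iff₀ hden]
        nlinarith
      have hst : Real.sin a < Real.sin θ := by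
        nlinarith [hsina ▸ hsm0]
      have hmono := Real.strictMonoOn_sin
      by_contra hcon
      push_neg at hcon
      have := hmono.monotoneOn ⟨by linarith [Real.pi_pos], by linarith⟩
        (Real.arcsin_mem_Icc _) hcon
      linarith
    · rintro ⟨haθ, hθπ⟩
      have hθ0 : 0 < θ := lt_trans ha0 haθ
      refine ⟨⟨hθ0, hθπ⟩, ?_⟩
      rw [empty_iff h0 he ⟨hθ0, hθπ⟩]
      have hst : Real.sin a < Real.sin θ :=
        Real.strictMonoOn_sin (Real.arcsin_mem_Icc _)
          ⟨by linarith [Real.pi_pos], hθπ.le⟩ haθ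
      have hsa : 0 < Real.sin a := hsina ▸ hsm0
      have hst2 : m < Real.sin θ ^ 2 := by
        rw [← hsina2]; nlinarith
      nlinarith
  have hθ₀ : θ₀ = a := by
    rw [θ₀, hset, csInf_Ioo haπ]
  rw [hθ₀, hsina2, hmid]

/-- The intersection `∂N_{θ₀} ∩ Cat` is the union of exactly two horizontal circles,
one at height `t₀ > 0` and one at height `-t₀` (hence reflections of each other through
the plane `{x₃ = 0}`), where `cosh t₀ = t₀ · sinh t₀`. -/
theorem stmt2 (hθ : θ₀ ∈ Ioo 0 (π / 4)) :
    ∃ t₀ : ℝ, 0 < t₀ ∧ Real.cosh t₀ = t₀ * Real.sinh t₀ ∧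
      coneBdry θ₀ ∩ Cat =
        {x : R3 | x 2 = t₀ ∧ x 0 ^ 2 + x 1 ^ 2 = Real.cosh t₀ ^ 2} ∪
        {x : R3 | x 2 = -t₀ ∧ x 0 ^ 2 + x 1 ^ 2 = Real.cosh t₀ ^ 2} := by
  obtain ⟨t₀, h0, he⟩ := exists_t0
  refine ⟨t₀, h0, he, ?_⟩
  have hsin := sin_theta0 h0 he
  set c := Real.cosh t₀ with hc
  have hcpos : 0 < c := Real.cosh_pos t₀
  have hden : 0 < t₀ ^ 2 + c ^ 2 := by positivity
  ext x
  rw [mem_inter_iff']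
  simp only [mem_union, mem_setOf_eq]
  constructor
  · rintro ⟨h1, h2⟩
    set t := x 2 with ht
    -- t² (t₀²+c²) = t₀² (t²+cosh²t)
    have hkey : t ^ 2 * c ^ 2 = t₀ ^ 2 * Real.cosh t ^ 2 := by
      nlinarith [h1, hsin]
    have htval : t = t₀ ∨ t = -t₀ := by
      by_contra hcon
      push_neg at hcon
      have := sq_cosh_lt h0 he hcon.1 hcon.2
      rw [← hc] at this
      linarith
    rcases htval with h | h
    · left; exact ⟨h, by rw [← h2, h]⟩
    · right; exact ⟨h, by rw [← h2, h, Real.cosh_neg]⟩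
  · rintro (⟨h1, h2⟩ | ⟨h1, h2⟩)
    · rw [h1]
      exact ⟨by nlinarith, by rw [h2]⟩
    · rw [h1, Real.cosh_neg]
      exact ⟨by nlinarith, by rw [h2]⟩
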